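/- arXiv:2105.13855 — 5 statements merged into one kernel-verified Lean document; each statement's English description precedes it below -/
import Mathlib

section
/- In the wait-free model, the start time of gradient-sending for layer 1 satisfies κ_1 = max over j ∈ {1,...,N} of ( Σ_{k=j}^N b_k + Σ_{k=2}^j r_k ), i.e., the recursion κ_N = b_N, κ_j = max{Σ_{k=j}^N b_k, κ_{j+1} + r_{j+1}} admits this closed-form solution. -/
open Finset

section MaxPlusRecurrence

variable {G : Type*} [AddCommGroup G] [LinearOrder G] [IsOrderedAddMonoid G]

/- Adding `r (j + 1)` commutes with `sup'`, so one unrolling step of the recurrence prepends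
`r (j + 1)` to every delay sum. -/
lemma sup'_Icc_add_sum_Ioc_eq_max {a r : ℕ → G} {j N : ℕ} (hj : j < N) :
    (Icc j N).sup' (nonempty_Icc.mpr hj.le) (fun i => a i + ∑ k ∈ Ioc j i, r k) =
      max (a j) ((Icc (j + 1) N).sup' (nonempty_Icc.mpr hj)
        (fun i => a i + ∑ k ∈ Ioc (j + 1) i, r k) + r (j + 1)) := by
  have hne : (Icc (j + 1) N).Nonempty := nonempty_Icc.mpr hj
  simp_rw [← insert_Icc_add_one_left_eq_Icc hj.le]
  rw [sup'_insert hne, Ioc_self, sum_empty, add_zero, sup'_add]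
  congr 1
  refine sup'_congr hne rfl fun i hi => ?_
  rw [← insert_Ioc_add_one_left_eq_Ioc (mem_Icc.mp hi).1, sum_insert left_notMem_Ioc]
  abel

theorem eq_sup'_of_max_add_recurrence {a r κ : ℕ → G} {j N : ℕ} (hjN : j ≤ N)
    (hκN : κ N = a N) (hκ : ∀ i, j ≤ i → i < N → κ i = max (a i) (κ (i + 1) + r (i + 1))) :
    κ j = (Icc j N).sup' (nonempty_Icc.mpr hjN) (fun i => a i + ∑ k ∈ Ioc j i, r k) := by
  induction hjN using Nat.decreasingInduction with
  | self => simp [hκN]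
  | of_succ j hj ih =>
    rw [hκ j le_rfl hj, ih fun i hi => hκ i (Nat.le_of_succ_le hi), sup'_Icc_add_sum_Ioc_eq_max hj]

end MaxPlusRecurrence

theorem waitfree_kappa_closed_form_general (N : ℕ) (hN : 1 ≤ N) (b r κ : ℕ → ℝ)
    (hκN : κ N = b N)
    (hκ : ∀ j, 1 ≤ j → j < N →
      κ j = max (∑ k ∈ Finset.Icc j N, b k) (κ (j + 1) + r (j + 1))) :
    κ 1 = (Finset.Icc 1 N).sup' (Finset.nonempty_Icc.mpr hN)
      (fun j => (∑ k ∈ Finset.Icc j N, b k) + ∑ k ∈ Finset.Icc 2 j, r k) := by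
  have hκN' : κ N = ∑ k ∈ Icc N N, b k := by rw [Icc_self, sum_singleton, hκN]
  rw [eq_sup'_of_max_add_recurrence hN hκN' hκ]
  simp_rw [← Icc_add_one_left_eq_Ioc]
  rfl

/-- Wait-free model: closed form for the gradient-sending start time of layer 1:
`κ 1 = max_{1 ≤ j ≤ N} ( Σ_{k=j}^N b_k + Σ_{k=2}^j r_k )`. -/
theorem waitfree_kappa_closed_form (N : ℕ) (hN : 1 ≤ N) (b r κ : ℕ → ℝ)
    (hb : ∀ j, 0 ≤ b j) (hr : ∀ j, 0 ≤ r j)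
    (hκN : κ N = b N)
    (hκ : ∀ j, 1 ≤ j → j < N →
      κ j = max (∑ k ∈ Finset.Icc j N, b k) (κ (j + 1) + r (j + 1))) :
    κ 1 = (Finset.Icc 1 N).sup' (Finset.nonempty_Icc.mpr hN)
      (fun j => (∑ k ∈ Finset.Icc j N, b k) + ∑ k ∈ Finset.Icc 2 j, r k) :=
  waitfree_kappa_closed_form_general N hN b r κ hκN hκ
end

section
/- In the priority-based model, if for every layer j ∈ {2,...,N} it holds that Σ_{k=2}^j r_k ≤ Σ_{k=1}^{j-1} b_k (computation-dominant regime, so that e_j = 0 for all j ≥ 2), then the per-sample training time equals t = Σ_{k=1}^N b_k + r_1 + φ + Σ_{k=1}^N f_k. -/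
/-- Priority-based model, computation-dominant regime: if
`Σ_{k=2}^j r_k ≤ Σ_{k=1}^{j-1} b_k` for every layer `j ∈ {2,...,N}` (so `e j = 0`
for all `j ≥ 2`), then the per-sample training time equals
`t = Σ b_k + r_1 + φ + Σ f_k`. -/
theorem priority_computation_dominant_time (N : ℕ) (hN : 1 ≤ N)
    (b r f e τ : ℕ → ℝ) (φ : ℝ)
    (hb : ∀ j, 1 ≤ j → j ≤ N → 0 < b j)
    (hr : ∀ j, 1 ≤ j → j ≤ N → 0 < r j)
    (hf : ∀ j, 1 ≤ j → j ≤ N → 0 < f j)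
    (hφ : 0 < φ)
    (he1 : e 1 = (∑ k ∈ Finset.Icc 1 N, b k) + r 1 + φ)
    (he : ∀ j (_hj2 : 2 ≤ j) (_hjN : j ≤ N),
      e j = if (∑ k ∈ Finset.Icc 1 (j - 1), b k) < (∑ k ∈ Finset.Icc 2 j, r k) then
        (∑ k ∈ Finset.Icc 2 j, r k) - (∑ k ∈ Finset.Icc 1 (j - 1), b k) +
          (Finset.Icc 1 (j - 1)).sup' (Finset.nonempty_Icc.mpr (by omega)) e
      else 0)
    (hτ1 : τ 1 = e 1)
    (hτ : ∀ j, 2 ≤ j → j ≤ N → τ j = max (τ (j - 1) + f (j - 1)) (e j))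
    (hdom : ∀ j, 2 ≤ j → j ≤ N →
      (∑ k ∈ Finset.Icc 2 j, r k) ≤ (∑ k ∈ Finset.Icc 1 (j - 1), b k)) :
    τ N + f N = (∑ k ∈ Finset.Icc 1 N, b k) + r 1 + φ + (∑ k ∈ Finset.Icc 1 N, f k) := by
  have he1pos : 0 < e 1 := by
    rw [he1]
    have hb0 : 0 ≤ ∑ k ∈ Finset.Icc 1 N, b k :=
      Finset.sum_nonneg fun k hk => by
        rw [Finset.mem_Icc] at hk
        exact (hb k hk.1 hk.2).le
    have := hr 1 le_rfl hN
    linarith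
  have key : ∀ j, 1 ≤ j → j ≤ N → τ j = e 1 + ∑ k ∈ Finset.Icc 1 (j - 1), f k := by
    intro j
    induction j with
    | zero => omega
    | succ n ih =>
      intro _ hjN
      rcases Nat.eq_or_lt_of_le (show 1 ≤ n + 1 from Nat.le_add_left 1 n) with h1 | h1
      · simp [← h1, hτ1]
      · have hn1 : 1 ≤ n := by omega
        have hnN : n ≤ N := by omega
        have ej0 : e (n + 1) = 0 := by
          rw [he (n+1) (by omega) hjN, if_neg]
          push_neg
          exact hdom (n+1) (by omega) hjN
        have hτn := ih hn1 hnN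
        have hfpos : 0 < f n := hf n hn1 hnN
        have hsum0 : 0 ≤ ∑ k ∈ Finset.Icc 1 (n - 1), f k :=
          Finset.sum_nonneg fun k hk => by
            rw [Finset.mem_Icc] at hk
            exact (hf k hk.1 (by omega)).le
        rw [hτ (n+1) (by omega) hjN, Nat.add_sub_cancel, ej0, hτn]
        rw [max_eq_left (by linarith)]
        have : Finset.Icc 1 n = insert n (Finset.Icc 1 (n-1)) := by
          rw [show n - 1 = n - 1 from rfl]
          ext k
          simp [Finset.mem_Icc, Finset.mem_insert]
          omega
        rw [this, Finset.sum_insert (by simp [Finset.mem_Icc]; omega)]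
        ring
  have hτN := key N hN le_rfl
  have : Finset.Icc 1 N = insert N (Finset.Icc 1 (N-1)) := by
    ext k; simp [Finset.mem_Icc, Finset.mem_insert]; omega
  rw [hτN, he1, this]
  rw [Finset.sum_insert (f := f) (by simp [Finset.mem_Icc]; omega)]
  ring
end

section
/- Grid-search approximation for sum-of-ratios: Let ζ(x) = Σ_{j=1}^J ζ_j(x) where each ζ_j(x) > 0 on a nonempty compact feasible set Ω, and let x* be a minimizer of ζ over Ω. Suppose for j = 1,...,J−1 the grid Q_j ⊂ [l_j, φ_j] satisfies: for every y ∈ [l_j, φ_j] there is ν ∈ Q_j with ν ≤ y ≤ (1+ε)ν, where l_j = min_Ω ζ_j and φ_j = max_Ω ζ_j. For each grid point ν = (ν_1,...,ν_{J-1}), let x^ν minimize ζ_J over {x ∈ Ω : ζ_j(x) ≤ (1+ε)ν_j ∀ j ≤ J−1} when that set is nonempty. Then the best grid solution x̃ = argmin over feasible grid points of Σ_j (1+ε)ν_j + ζ_J(x^ν) satisfies ζ(x̃) ≤ (1+ε)·ζ(x*). -/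
/-- Grid-search approximation for the sum-of-ratios problem: the best grid solution is
within a multiplicative factor `(1+ε)` of the optimum. -/
theorem grid_search_approximation (n m : ℕ)
    (Ω : Set (Fin n → ℝ)) (hΩne : Ω.Nonempty) (hΩc : IsCompact Ω)
    (ζ : Fin m → (Fin n → ℝ) → ℝ) (ζJ : (Fin n → ℝ) → ℝ)
    (hζcont : ∀ j, ContinuousOn (ζ j) Ω) (hζJcont : ContinuousOn ζJ Ω)
    (hζpos : ∀ j, ∀ x ∈ Ω, 0 < ζ j x) (hζJpos : ∀ x ∈ Ω, 0 < ζJ x)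
    (ε : ℝ) (hε : ε ∈ Set.Ioo (0:ℝ) 1)
    (l φ : Fin m → ℝ)
    (hlj : ∀ j, IsLeast (ζ j '' Ω) (l j))
    (hφj : ∀ j, IsGreatest (ζ j '' Ω) (φ j))
    (Q : Fin m → Finset ℝ)
    (hQ : ∀ j, ∀ y ∈ Set.Icc (l j) (φ j), ∃ ν ∈ Q j, ν ≤ y ∧ y ≤ (1 + ε) * ν)
    (xstar : Fin n → ℝ) (hxstar : xstar ∈ Ω)
    (hxstarmin : ∀ x ∈ Ω, (∑ j, ζ j xstar) + ζJ xstar ≤ (∑ j, ζ j x) + ζJ x)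
    (sel : (Fin m → ℝ) → (Fin n → ℝ))
    (hsel : ∀ ν ∈ Fintype.piFinset Q,
      ({x ∈ Ω | ∀ j, ζ j x ≤ (1 + ε) * ν j}).Nonempty →
        sel ν ∈ {x ∈ Ω | ∀ j, ζ j x ≤ (1 + ε) * ν j} ∧
        ∀ x ∈ {x ∈ Ω | ∀ j, ζ j x ≤ (1 + ε) * ν j}, ζJ (sel ν) ≤ ζJ x)
    (νt : Fin m → ℝ) (hνt : νt ∈ Fintype.piFinset Q)
    (hνtfeas : ({x ∈ Ω | ∀ j, ζ j x ≤ (1 + ε) * νt j}).Nonempty)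
    (hνtbest : ∀ ν ∈ Fintype.piFinset Q,
      ({x ∈ Ω | ∀ j, ζ j x ≤ (1 + ε) * ν j}).Nonempty →
        (∑ j, (1 + ε) * νt j) + ζJ (sel νt) ≤ (∑ j, (1 + ε) * ν j) + ζJ (sel ν)) :
    (∑ j, ζ j (sel νt)) + ζJ (sel νt) ≤ (1 + ε) * ((∑ j, ζ j xstar) + ζJ xstar) := by
  obtain ⟨hε0, hε1⟩ := hε
  -- choose grid point below ζ j xstar
  have hmem : ∀ j, ζ j xstar ∈ Set.Icc (l j) (φ j) := fun j =>
    ⟨(hlj j).2 ⟨xstar, hxstar, rfl⟩, (hφj j).2 ⟨xstar, hxstar, rfl⟩⟩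
  choose νs hνsQ hνsle hνsge using fun j => hQ j (ζ j xstar) (hmem j)
  have hνsQ' : νs ∈ Fintype.piFinset Q := by
    rw [Fintype.mem_piFinset]; exact hνsQ
  have hxfeas : xstar ∈ {x ∈ Ω | ∀ j, ζ j x ≤ (1 + ε) * νs j} :=
    ⟨hxstar, fun j => hνsge j⟩
  have hνsne : ({x ∈ Ω | ∀ j, ζ j x ≤ (1 + ε) * νs j}).Nonempty := ⟨xstar, hxfeas⟩
  obtain ⟨⟨hselΩ, hselle⟩, _⟩ := hsel νt hνt hνtfeas
  obtain ⟨_, hselmin⟩ := hsel νs hνsQ' hνsne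
  have h1 : (∑ j, ζ j (sel νt)) + ζJ (sel νt) ≤ (∑ j, (1 + ε) * νt j) + ζJ (sel νt) := by
    gcongr with j _
    exact hselle j
  have h2 := hνtbest νs hνsQ' hνsne
  have h3 : ζJ (sel νs) ≤ ζJ xstar := hselmin xstar hxfeas
  have h4 : (∑ j, (1 + ε) * νs j) ≤ (1 + ε) * ∑ j, ζ j xstar := by
    rw [← Finset.mul_sum]
    exact mul_le_mul_of_nonneg_left (Finset.sum_le_sum fun j _ => hνsle j) (by linarith)
  have h5 : ζJ xstar ≤ (1 + ε) * ζJ xstar := by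
    nlinarith [hζJpos xstar hxstar]
  calc (∑ j, ζ j (sel νt)) + ζJ (sel νt)
      ≤ (∑ j, (1 + ε) * νt j) + ζJ (sel νt) := h1
    _ ≤ (∑ j, (1 + ε) * νs j) + ζJ (sel νs) := h2
    _ ≤ (1 + ε) * (∑ j, ζ j xstar) + (1 + ε) * ζJ xstar := by
        have := h3.trans h5; linarith
    _ = (1 + ε) * ((∑ j, ζ j xstar) + ζJ xstar) := by ring
end

section
/- If for each job i the achieved utility satisfies μ_i(τ_i) ≥ μ' and the optimal utility satisfies μ_i(τ_i*) ≤ μ*, and the MKP solver returns a job subset achieving at least (1 − ε₂) times the optimal knapsack value computed with the achieved utilities, then the total achieved utility is at least (μ'(1 − ε₂)/μ*) times the optimal total utility of the original problem. -/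
/-- Overall approximation ratio: if every job's achieved utility is at least `μ'`,
every job's optimal utility is at most `μ*`, and the MKP solver returns a feasible
subset achieving at least `(1 - ε₂)` of the optimal knapsack value (computed with the
achieved utilities), then the total achieved utility is at least
`μ'(1 - ε₂)/μ*` times the optimal total utility. -/
theorem smd_overall_approximation {ι : Type*} [Fintype ι] [DecidableEq ι]
    (μach μopt : ι → ℝ) (μ' μstar ε₂ : ℝ)
    (hμ' : 0 < μ') (hμstar : 0 < μstar) (hε₂ : ε₂ ∈ Set.Ioo (0:ℝ) 1)
    (hach_nonneg : ∀ i, 0 ≤ μach i) (hopt_nonneg : ∀ i, 0 ≤ μopt i)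
    (hach_lb : ∀ i, μ' ≤ μach i) (hopt_ub : ∀ i, μopt i ≤ μstar)
    (Feas : Finset ι → Prop)
    (S Sstar : Finset ι) (hS : Feas S) (hSstar : Feas Sstar)
    (happrox : ∀ T : Finset ι, Feas T →
      (1 - ε₂) * (∑ i ∈ T, μach i) ≤ ∑ i ∈ S, μach i) :
    (μ' * (1 - ε₂) / μstar) * (∑ i ∈ Sstar, μopt i) ≤ ∑ i ∈ S, μach i := by
  obtain ⟨hε0, hε1⟩ := hε₂
  have h1 : ∑ i ∈ Sstar, μopt i ≤ Sstar.card * μstar := by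
    calc ∑ i ∈ Sstar, μopt i ≤ ∑ _i ∈ Sstar, μstar :=
          Finset.sum_le_sum fun i _ => hopt_ub i
      _ = Sstar.card * μstar := by simp [mul_comm]
  have h2 : (Sstar.card : ℝ) * μ' ≤ ∑ i ∈ Sstar, μach i := by
    calc (Sstar.card : ℝ) * μ' = ∑ _i ∈ Sstar, μ' := by simp [mul_comm]
      _ ≤ ∑ i ∈ Sstar, μach i := Finset.sum_le_sum fun i _ => hach_lb i
  have key : (μ' * (1 - ε₂) / μstar) * (∑ i ∈ Sstar, μopt i)
      ≤ (1 - ε₂) * (∑ i ∈ Sstar, μach i) := by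
    have hc : (μ' * (1 - ε₂) / μstar) * (Sstar.card * μstar)
        = (1 - ε₂) * ((Sstar.card : ℝ) * μ') := by
      field_simp
    calc (μ' * (1 - ε₂) / μstar) * (∑ i ∈ Sstar, μopt i)
        ≤ (μ' * (1 - ε₂) / μstar) * (Sstar.card * μstar) := by
          apply mul_le_mul_of_nonneg_left h1
          have : 0 ≤ 1 - ε₂ := by linarith
          positivity
      _ = (1 - ε₂) * ((Sstar.card : ℝ) * μ') := hc
      _ ≤ (1 - ε₂) * (∑ i ∈ Sstar, μach i) := by
          apply mul_le_mul_of_nonneg_left h2; linarith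
  exact key.trans (happrox Sstar hSstar)
end

section
/- Charnes–Cooper transformation: Minimizing ζ(x) = (a·x + q)/(c·x + d) over Ω = {x : Ax ≤ C, x ≥ 0} with c·x + d > 0 on Ω is equivalent to the linear program: minimize a·y + q·s subject to A y ≤ C s, c·y + d·s = 1, y ≥ 0, s > 0; specifically, x ↦ (x/(c·x+d), 1/(c·x+d)) and (y,s) ↦ y/s are mutually inverse bijections between the feasible sets that preserve objective values. -/
/-!
Both maps are homogenisations: for `t ≠ 0`, the affine form `w·x + b` evaluated at `x / t` equals
`(w·x + b·t) / t`. Hence dividing `x ∈ Ω` by `t = c·x + d > 0` turns the constraint `A x ≤ C` into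
`A y ≤ C s`, normalises `c·y + d·s` to `1`, and divides the numerator `a·x + q` by the denominator
`c·x + d`; conversely, `c·y + d·s = 1` forces `c·(y/s) + d = 1/s`, so the two maps are inverse.
-/

open Finset

section Homogenization

variable {ι K : Type*}

theorem Finset.sum_mul_div [DivisionSemiring K] (s : Finset ι) (w x : ι → K) (t : K) :
    ∑ j ∈ s, w j * (x j / t) = (∑ j ∈ s, w j * x j) / t := by
  simp_rw [← mul_div_assoc, Finset.sum_div]

variable [Field K]

theorem Finset.sum_mul_div_add_mul_one_div (s : Finset ι) (w x : ι → K) (b t : K) :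
    ∑ j ∈ s, w j * (x j / t) + b * (1 / t) = (∑ j ∈ s, w j * x j + b) / t := by
  rw [Finset.sum_mul_div]
  ring

theorem Finset.sum_mul_div_add (s : Finset ι) (w x : ι → K) (b : K) {t : K} (ht : t ≠ 0) :
    ∑ j ∈ s, w j * (x j / t) + b = (∑ j ∈ s, w j * x j + b * t) / t := by
  rw [Finset.sum_mul_div]
  field_simp

theorem Finset.sum_mul_div_le_iff [LinearOrder K] [IsStrictOrderedRing K] (s : Finset ι)
    (w x : ι → K) (b : K) {t : K} (ht : 0 < t) :
    ∑ j ∈ s, w j * (x j / t) ≤ b ↔ ∑ j ∈ s, w j * x j ≤ b * t := by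
  rw [Finset.sum_mul_div, div_le_iff₀ ht]

end Homogenization

theorem charnes_cooper_transformation_general (n m : ℕ)
    (A : Fin m → Fin n → ℝ) (C : Fin m → ℝ)
    (a c : Fin n → ℝ) (q d : ℝ)
    (Ωs : Set (Fin n → ℝ))
    (hΩ : Ωs = {x | (∀ i, (∑ j, A i j * x j) ≤ C i) ∧ ∀ j, 0 ≤ x j})
    (hpos : ∀ x ∈ Ωs, 0 < (∑ j, c j * x j) + d)
    (Λ : Set ((Fin n → ℝ) × ℝ))
    (hΛ : Λ = {ys | (∀ i, (∑ j, A i j * ys.1 j) ≤ C i * ys.2) ∧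
      ((∑ j, c j * ys.1 j) + d * ys.2 = 1) ∧ (∀ j, 0 ≤ ys.1 j) ∧ 0 < ys.2}) :
    (∀ x ∈ Ωs,
      ((fun j => x j / ((∑ k, c k * x k) + d)), 1 / ((∑ k, c k * x k) + d)) ∈ Λ ∧
      (fun j => (x j / ((∑ k, c k * x k) + d)) / (1 / ((∑ k, c k * x k) + d))) = x ∧
      (∑ j, a j * (x j / ((∑ k, c k * x k) + d))) + q * (1 / ((∑ k, c k * x k) + d))
        = ((∑ j, a j * x j) + q) / ((∑ j, c j * x j) + d)) ∧
    (∀ ys ∈ Λ,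
      (fun j => ys.1 j / ys.2) ∈ Ωs ∧
      ((fun j => (ys.1 j / ys.2) / ((∑ k, c k * (ys.1 k / ys.2)) + d)),
        1 / ((∑ k, c k * (ys.1 k / ys.2)) + d)) = ys ∧
      ((∑ j, a j * (ys.1 j / ys.2)) + q) / ((∑ j, c j * (ys.1 j / ys.2)) + d)
        = (∑ j, a j * ys.1 j) + q * ys.2) := by
  subst hΩ hΛ
  refine ⟨fun x hx => ?_, fun ys ⟨hA, hcd, hy0, hs⟩ => ?_⟩
  · have ht := hpos x hx
    obtain ⟨hA, hx0⟩ := hx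
    refine ⟨⟨fun i => (sum_mul_div_le_iff _ _ _ _ ht).2 ?_, ?_,
        fun j => div_nonneg (hx0 j) ht.le, by positivity⟩,
      funext fun j => by field_simp, sum_mul_div_add_mul_one_div _ _ _ _ _⟩
    · rw [mul_assoc, one_div_mul_cancel ht.ne', mul_one]
      exact hA i
    · rw [sum_mul_div_add_mul_one_div, div_self ht.ne']
  · have hden : ∑ k, c k * (ys.1 k / ys.2) + d = 1 / ys.2 := by
      rw [sum_mul_div_add _ _ _ _ hs.ne', hcd]
    refine ⟨⟨fun i => (sum_mul_div_le_iff _ _ _ _ hs).2 (hA i),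
        fun j => div_nonneg (hy0 j) hs.le⟩, ?_, ?_⟩
    · rw [hden, one_div_one_div]
      exact Prod.ext (funext fun j => by field_simp) rfl
    · rw [hden, sum_mul_div_add _ _ _ _ hs.ne', div_div_div_cancel_right₀ hs.ne', div_one]

/-- Charnes–Cooper transformation: `x ↦ (x/(c·x+d), 1/(c·x+d))` and `(y,s) ↦ y/s` are
mutually inverse bijections between the fractional program's feasible set `Ω` and the
linear program's feasible set `Λ`, preserving objective values. -/
theorem charnes_cooper_transformation (n m : ℕ)
    (A : Fin m → Fin n → ℝ) (C : Fin m → ℝ)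
    (a c : Fin n → ℝ) (q d : ℝ)
    (Ωs : Set (Fin n → ℝ))
    (hΩ : Ωs = {x | (∀ i, (∑ j, A i j * x j) ≤ C i) ∧ ∀ j, 0 ≤ x j})
    (hne : Ωs.Nonempty) (hbd : Bornology.IsBounded Ωs)
    (hpos : ∀ x ∈ Ωs, 0 < (∑ j, c j * x j) + d)
    (Λ : Set ((Fin n → ℝ) × ℝ))
    (hΛ : Λ = {ys | (∀ i, (∑ j, A i j * ys.1 j) ≤ C i * ys.2) ∧
      ((∑ j, c j * ys.1 j) + d * ys.2 = 1) ∧ (∀ j, 0 ≤ ys.1 j) ∧ 0 < ys.2}) :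
    (∀ x ∈ Ωs,
      ((fun j => x j / ((∑ k, c k * x k) + d)), 1 / ((∑ k, c k * x k) + d)) ∈ Λ ∧
      (fun j => (x j / ((∑ k, c k * x k) + d)) / (1 / ((∑ k, c k * x k) + d))) = x ∧
      (∑ j, a j * (x j / ((∑ k, c k * x k) + d))) + q * (1 / ((∑ k, c k * x k) + d))
        = ((∑ j, a j * x j) + q) / ((∑ j, c j * x j) + d)) ∧
    (∀ ys ∈ Λ,
      (fun j => ys.1 j / ys.2) ∈ Ωs ∧
      ((fun j => (ys.1 j / ys.2) / ((∑ k, c k * (ys.1 k / ys.2)) + d)),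
        1 / ((∑ k, c k * (ys.1 k / ys.2)) + d)) = ys ∧
      ((∑ j, a j * (ys.1 j / ys.2)) + q) / ((∑ j, c j * (ys.1 j / ys.2)) + d)
        = (∑ j, a j * ys.1 j) + q * ys.2) :=
  charnes_cooper_transformation_general n m A C a c q d Ωs hΩ hpos Λ hΛ
end
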